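/- For every natural number n and every λ-term θ β-equivalent to the Church numeral n̲, the head reduction of (T₁)θf reaches the head normal form (f)(s̲)ⁿ0̲, where T₁ = λn((n)δ)G with G = λx λy (x) λz (y)(s̲)z and δ = λf (f)0̲. -/

import Mathlib

/- Untyped λ-calculus with de Bruijn indices, head reduction, Church numerals. -/

inductive Lam : Type
  | var : ℕ → Lam
  | app : Lam → Lam → Lam
  | lam : Lam → Lam
deriving DecidableEq, Repr

namespace Lam

/-- Shift free variables `≥ c` up by 1. -/
def lift (c : ℕ) : Lam → Lam
  | var n => if n < c then var n else var (n + 1)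
  | app s t => app (s.lift c) (t.lift c)
  | lam t => lam (t.lift (c + 1))

/-- Push a substitution under a binder. -/
def up (σ : ℕ → Lam) : ℕ → Lam
  | 0 => var 0
  | n + 1 => (σ n).lift 0

/-- Capture-avoiding simultaneous substitution. -/
def subst (σ : ℕ → Lam) : Lam → Lam
  | var n => σ n
  | app s t => app (s.subst σ) (t.subst σ)
  | lam t => lam (t.subst (up σ))

/-- `t.subst0 u` is `t[u/0]`, the β-contractum substitution. -/
def subst0 (t u : Lam) : Lam :=
  t.subst (fun n => match n with | 0 => u | n + 1 => var n)

/-- `m` occurs free in the term. -/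
def FreeIn (m : ℕ) : Lam → Prop
  | var n => n = m
  | app s t => s.FreeIn m ∨ t.FreeIn m
  | lam t => t.FreeIn (m + 1)

/-- A closed λ-term. -/
def Closed (t : Lam) : Prop := ∀ m, ¬ t.FreeIn m

end Lam

/-- One-step β-reduction (anywhere in the term). -/
inductive Beta : Lam → Lam → Prop
  | beta (t u) : Beta (.app (.lam t) u) (t.subst0 u)
  | appL {s s'} (t) : Beta s s' → Beta (.app s t) (.app s' t)
  | appR {t t'} (s) : Beta t t' → Beta (.app s t) (.app s t')
  | lam {t t'} : Beta t t' → Beta (.lam t) (.lam t')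

/-- β-equivalence `≃β`. -/
def BetaEq : Lam → Lam → Prop := Relation.EqvGen Beta

/-- A term in (β-)normal form. -/
def NormalForm (t : Lam) : Prop := ∀ u, ¬ Beta t u

/-- One step of head reduction: reduce the head redex. -/
inductive HStep : Lam → Lam → Prop
  | beta (t u) : HStep (.app (.lam t) u) (t.subst0 u)
  | lam {t t'} : HStep t t' → HStep (.lam t) (.lam t')
  | app {t t'} (u) : HStep t t' → (∀ s, t ≠ .lam s) → HStep (.app t u) (.app t' u)

/-- `HRedN k u v` : `u ≻ v` by a head reduction of length `h(u,v) = k`. -/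
inductive HRedN : ℕ → Lam → Lam → Prop
  | refl (t) : HRedN 0 t t
  | step {k t u v} : HStep t u → HRedN k u v → HRedN (k + 1) t v

/-- `u ≻ v` : `v` is obtained from `u` by head reduction. -/
def HRed (t u : Lam) : Prop := ∃ k, HRedN k t u

/-- Head normal form: no head redex. -/
def HeadNormal (t : Lam) : Prop := ∀ u, ¬ HStep t u

/-- Solvable: the head reduction terminates. -/
def Solvable (t : Lam) : Prop := ∃ v, HRed t v ∧ HeadNormal v

/-- `(t)u₁…uₙ` : iterated application. -/
def appList : Lam → List Lam → Lam
  | t, [] => t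
  | t, u :: us => appList (t.app u) us

/-- `(f)ⁿ x` with `x = var 1`, `f = var 0`. -/
def churchBody : ℕ → Lam
  | 0 => .var 1
  | n + 1 => .app (.var 0) (churchBody n)

/-- Church numeral `n̲ = λx λf (f)ⁿ x`. -/
def church (n : ℕ) : Lam := .lam (.lam (churchBody n))

/-- `0̲ = λx λf x`. -/
def czero : Lam := .lam (.lam (.var 1))

/-- `s̲ = λn λx λf (f)((n)x)f`. -/
def csucc : Lam := .lam (.lam (.lam (.app (.var 0) (.app (.app (.var 2) (.var 1)) (.var 0)))))

/-- `(s̲)ⁿ 0̲`. -/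
def succIter : ℕ → Lam
  | 0 => czero
  | n + 1 => .app csucc (succIter n)

/-- `G = λx λy (x) λz (y)(s̲)z`. -/
def Gop : Lam := .lam (.lam (.app (.var 1) (.lam (.app (.var 1) (.app csucc (.var 0))))))

/-- `δ = λf (f)0̲`. -/
def deltaOp : Lam := .lam (.app (.var 0) czero)

/-- `T₁ = λn ((n)δ)G`. -/
def T1 : Lam := .lam (.app (.app (.var 0) deltaOp) Gop)

/-- `F = λx λy (x)(s̲)y`. -/
def Fop : Lam := .lam (.lam (.app (.var 1) (.app csucc (.var 0))))

/-- `T₂ = λn λf (((n)f)F)0̲`. -/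
def T2 : Lam := .lam (.lam (.app (.app (.app (.var 1) (.var 0)) Fop) czero))

/-- `θ₀ = λx λf λz (x)(λd z)(λx x)`. -/
def theta0 : Lam := .lam (.lam (.lam (.app (.app (.var 2) (.lam (.var 1))) (.lam (.var 0)))))

/-- `T` is a storage operator for the integers (the fixed variable `f` is `var 0`). -/
def IsStorage (T : Lam) : Prop :=
  ∀ n : ℕ, ∃ τ : Lam, BetaEq τ (church n) ∧
    ∀ θ : Lam, BetaEq θ (church n) →
      ∃ σ : ℕ → Lam, HRed (.app (.app T θ) (.var 0)) (.app (.var 0) (τ.subst σ))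

/-!
Since `n̲` is β-normal, the Church–Rosser theorem (via Takahashi's parallel reduction) turns
`θ ≃β n̲` into `θ →β n̲`, and standardization (via Kashima's relation `StdRed`) lets this reduction
begin with weak head reductions: `θ` reaches some `λx A`, `A` reaches some `λf ξ`, and `ξ` reduces
in standard order to `(f)ⁿx`. Hence `(T₁)θf ≻ (ξ[δ/x, G/f])f`. Put `ψ₀ = f` and
`ψₖ₊₁ = λz (ψₖ)(s̲)z` (`succCont f k`). A head occurrence of `f` in `ξ`, now `G`, turns
`((G)ξ')ψₖ` into `(ξ')ψₖ₊₁`, and the final `x`, now `δ`, turns `(δ)ψₖ` into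
`(ψₖ)0̲ ≻ (f)(s̲)ᵏ0̲`; so `(ξ[δ/x, G/f])ψₖ ≻ (f)(s̲)ⁿ⁺ᵏ0̲` by induction on `n`.
-/

open Relation

namespace Lam

def upr (ρ : ℕ → ℕ) : ℕ → ℕ
  | 0 => 0
  | n + 1 => ρ n + 1

def rename (ρ : ℕ → ℕ) : Lam → Lam
  | var n => var (ρ n)
  | app s t => app (s.rename ρ) (t.rename ρ)
  | lam t => lam (t.rename (upr ρ))

def shiftAt (c n : ℕ) : ℕ := if n < c then n else n + 1

def scons (u : Lam) (σ : ℕ → Lam) : ℕ → Lam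
  | 0 => u
  | n + 1 => σ n

theorem subst0_eq_subst_scons (t u : Lam) : t.subst0 u = t.subst (scons u var) := rfl

theorem lift_eq_rename (t : Lam) (c : ℕ) : t.lift c = t.rename (shiftAt c) := by
  induction t generalizing c with
  | var n => simp only [lift, rename, shiftAt]; split <;> rfl
  | app s t ihs iht => simp only [lift, rename, ihs, iht]
  | lam t ih =>
    have : upr (shiftAt c) = shiftAt (c + 1) := by
      funext n; cases n <;> simp [upr, shiftAt, apply_ite]
    simp only [lift, rename, ih, this]

theorem rename_rename (ρ ρ' : ℕ → ℕ) (t : Lam) :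
    (t.rename ρ).rename ρ' = t.rename (fun n => ρ' (ρ n)) := by
  induction t generalizing ρ ρ' with
  | var n => rfl
  | app s t ihs iht => simp only [rename, ihs, iht]
  | lam t ih =>
    have : (fun n => upr ρ' (upr ρ n)) = upr (fun n => ρ' (ρ n)) := by
      funext n; cases n <;> rfl
    simp only [rename, ih, this]

theorem rename_subst (ρ : ℕ → ℕ) (σ : ℕ → Lam) (t : Lam) :
    (t.rename ρ).subst σ = t.subst (fun n => σ (ρ n)) := by
  induction t generalizing ρ σ with
  | var n => rfl
  | app s t ihs iht => simp only [rename, subst, ihs, iht]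
  | lam t ih =>
    have : (fun n => up σ (upr ρ n)) = up (fun n => σ (ρ n)) := by
      funext n; cases n <;> rfl
    simp only [rename, subst, ih, this]

theorem subst_rename (σ : ℕ → Lam) (ρ : ℕ → ℕ) (t : Lam) :
    (t.subst σ).rename ρ = t.subst (fun n => (σ n).rename ρ) := by
  induction t generalizing ρ σ with
  | var n => rfl
  | app s t ihs iht => simp only [rename, subst, ihs, iht]
  | lam t ih =>
    have : (fun n => (up σ n).rename (upr ρ)) = up (fun n => (σ n).rename ρ) := by
      funext n
      cases n with
      | zero => rfl
      | succ n => simp only [up, lift_eq_rename, rename_rename]; rfl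
    simp only [rename, subst, ih, this]

theorem subst_subst (σ τ : ℕ → Lam) (t : Lam) :
    (t.subst σ).subst τ = t.subst (fun n => (σ n).subst τ) := by
  induction t generalizing σ τ with
  | var n => rfl
  | app s t ihs iht => simp only [subst, ihs, iht]
  | lam t ih =>
    have : (fun n => (up σ n).subst (up τ)) = up (fun n => (σ n).subst τ) := by
      funext n
      cases n with
      | zero => rfl
      | succ n => simp only [up, lift_eq_rename, rename_subst, subst_rename]; rfl
    simp only [subst, ih, this]

theorem subst_var (t : Lam) : t.subst var = t := by
  induction t with
  | var n => rfl
  | app s t ihs iht => simp only [subst, ihs, iht]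
  | lam t ih =>
    have : up var = var := by
      funext n; cases n <;> rfl
    simp only [subst, this, ih]

theorem lift_subst0 (t u : Lam) : (t.lift 0).subst0 u = t := by
  rw [subst0_eq_subst_scons, lift_eq_rename, rename_subst]
  exact subst_var t

theorem subst_up_subst0 (t u : Lam) (σ : ℕ → Lam) :
    (t.subst (up σ)).subst0 u = t.subst (scons u σ) := by
  rw [subst0_eq_subst_scons, subst_subst]
  congr 1
  funext n
  cases n with
  | zero => rfl
  | succ n => exact lift_subst0 (σ n) u

theorem subst0_subst (t u : Lam) (σ : ℕ → Lam) :
    (t.subst0 u).subst σ = (t.subst (up σ)).subst0 (u.subst σ) := by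
  rw [subst_up_subst0, subst0_eq_subst_scons, subst_subst]
  congr 1
  funext n
  cases n <;> rfl

theorem subst0_rename (t u : Lam) (ρ : ℕ → ℕ) :
    (t.subst0 u).rename ρ = (t.rename (upr ρ)).subst0 (u.rename ρ) := by
  rw [subst0_eq_subst_scons, subst0_eq_subst_scons, subst_rename, rename_subst]
  congr 1
  funext n
  cases n <;> rfl

inductive WHStep : Lam → Lam → Prop
  | beta (t u) : WHStep (.app (.lam t) u) (t.subst0 u)
  | app {t t'} (u) : WHStep t t' → WHStep (.app t u) (.app t' u)

abbrev WHRed : Lam → Lam → Prop := ReflTransGen WHStep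

theorem WHStep.hStep {t u : Lam} (h : WHStep t u) : HStep t u := by
  induction h with
  | beta t u => exact HStep.beta t u
  | app u h ih =>
    refine HStep.app _ ih fun s hs => ?_
    cases h <;> cases hs

theorem WHRed.hRed {t u : Lam} (h : WHRed t u) : HRed t u := by
  induction h using ReflTransGen.head_induction_on with
  | refl => exact ⟨0, HRedN.refl u⟩
  | head hstep _ ih =>
    obtain ⟨k, hk⟩ := ih
    exact ⟨k + 1, HRedN.step hstep.hStep hk⟩

theorem WHStep.subst {t u : Lam} (σ : ℕ → Lam) (h : WHStep t u) :
    WHStep (t.subst σ) (u.subst σ) := by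
  induction h with
  | beta t u => rw [subst0_subst]; exact WHStep.beta _ _
  | app u _ ih => exact WHStep.app _ ih

theorem WHStep.rename {t u : Lam} (ρ : ℕ → ℕ) (h : WHStep t u) :
    WHStep (t.rename ρ) (u.rename ρ) := by
  induction h with
  | beta t u => rw [subst0_rename]; exact WHStep.beta _ _
  | app u _ ih => exact WHStep.app _ ih

theorem WHRed.appL {t t' : Lam} (u : Lam) (h : WHRed t t') : WHRed (.app t u) (.app t' u) :=
  ReflTransGen.lift (fun x => Lam.app x u) (fun _ _ => WHStep.app u) _ _ h

theorem WHRed.subst {t u : Lam} (σ : ℕ → Lam) (h : WHRed t u) : WHRed (t.subst σ) (u.subst σ) :=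
  ReflTransGen.lift (Lam.subst σ) (fun _ _ => WHStep.subst σ) _ _ h

theorem WHRed.rename {t u : Lam} (ρ : ℕ → ℕ) (h : WHRed t u) : WHRed (t.rename ρ) (u.rename ρ) :=
  ReflTransGen.lift (Lam.rename ρ) (fun _ _ => WHStep.rename ρ) _ _ h

theorem WHRed.beta {t a : Lam} (h : WHRed t (.lam a)) (u : Lam) : WHRed (.app t u) (a.subst0 u) :=
  (h.appL u).tail (WHStep.beta a u)

abbrev BRed : Lam → Lam → Prop := ReflTransGen Beta

theorem BRed.appL {t t' : Lam} (u : Lam) (h : BRed t t') : BRed (.app t u) (.app t' u) :=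
  ReflTransGen.lift (fun x => Lam.app x u) (fun _ _ => Beta.appL u) _ _ h

theorem BRed.appR {t t' : Lam} (u : Lam) (h : BRed t t') : BRed (.app u t) (.app u t') :=
  ReflTransGen.lift (Lam.app u) (fun _ _ => Beta.appR u) _ _ h

theorem BRed.lam {t t' : Lam} (h : BRed t t') : BRed (.lam t) (.lam t') :=
  ReflTransGen.lift Lam.lam (fun _ _ => Beta.lam) _ _ h

inductive StdRed : Lam → Lam → Prop
  | var {M : Lam} {x : ℕ} : WHRed M (.var x) → StdRed M (.var x)
  | app {M A B A' B' : Lam} : WHRed M (.app A B) → StdRed A A' → StdRed B B' →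
      StdRed M (.app A' B')
  | lam {M A A' : Lam} : WHRed M (.lam A) → StdRed A A' → StdRed M (.lam A')

namespace StdRed

theorem refl (t : Lam) : StdRed t t := by
  induction t with
  | var n => exact var .refl
  | app s t ihs iht => exact app .refl ihs iht
  | lam t ih => exact lam .refl ih

theorem whRed_left {M N P : Lam} (h : WHRed M N) : StdRed N P → StdRed M P
  | var h' => var (h.trans h')
  | app h' ha hb => app (h.trans h') ha hb
  | lam h' ha => lam (h.trans h') ha

theorem var_inv {M : Lam} {x : ℕ} : StdRed M (.var x) → WHRed M (.var x)
  | var h => h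

theorem app_inv {M A' B' : Lam} :
    StdRed M (.app A' B') → ∃ A B, WHRed M (.app A B) ∧ StdRed A A' ∧ StdRed B B'
  | app h ha hb => ⟨_, _, h, ha, hb⟩

theorem lam_inv {M A' : Lam} : StdRed M (.lam A') → ∃ A, WHRed M (.lam A) ∧ StdRed A A'
  | lam h ha => ⟨_, h, ha⟩

theorem rename {M N : Lam} (ρ : ℕ → ℕ) (h : StdRed M N) : StdRed (M.rename ρ) (N.rename ρ) := by
  induction h generalizing ρ with
  | var h => exact var (h.rename ρ)
  | app h _ _ iha ihb => exact app (h.rename ρ) (iha ρ) (ihb ρ)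
  | lam h _ ih => exact lam (h.rename ρ) (ih _)

theorem subst {M N : Lam} {σ σ' : ℕ → Lam} (hσ : ∀ n, StdRed (σ n) (σ' n))
    (h : StdRed M N) : StdRed (M.subst σ) (N.subst σ') := by
  induction h generalizing σ σ' with
  | var h => exact (hσ _).whRed_left (h.subst σ)
  | app h _ _ iha ihb => exact app (h.subst σ) (iha hσ) (ihb hσ)
  | lam h _ ih =>
    refine lam (h.subst σ) (ih fun n => ?_)
    cases n with
    | zero => exact refl _
    | succ n => simpa only [up, lift_eq_rename] using (hσ n).rename _

theorem tail_beta {M N N' : Lam} (h : StdRed M N) (hb : Beta N N') : StdRed M N' := by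
  induction hb generalizing M with
  | beta t u =>
    obtain ⟨A, B, hM, hA, hB⟩ := h.app_inv
    obtain ⟨A₀, hA, hA₀⟩ := hA.lam_inv
    refine whRed_left (hM.trans (hA.beta B)) (subst (fun n => ?_) hA₀)
    cases n with
    | zero => exact hB
    | succ n => exact refl _
  | appL t _ ih =>
    obtain ⟨A, B, hM, hA, hB⟩ := h.app_inv
    exact app hM (ih hA) hB
  | appR s _ ih =>
    obtain ⟨A, B, hM, hA, hB⟩ := h.app_inv
    exact app hM hA (ih hB)
  | lam _ ih =>
    obtain ⟨A, hM, hA⟩ := h.lam_inv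
    exact lam hM (ih hA)

theorem of_bRed {M N : Lam} (h : BRed M N) : StdRed M N := by
  induction h with
  | refl => exact refl M
  | tail _ hb ih => exact ih.tail_beta hb

end StdRed

inductive Par : Lam → Lam → Prop
  | var (x) : Par (.var x) (.var x)
  | lam {t t'} : Par t t' → Par (.lam t) (.lam t')
  | app {a a' b b'} : Par a a' → Par b b' → Par (.app a b) (.app a' b')
  | beta {a a' b b'} : Par a a' → Par b b' → Par (.app (.lam a) b) (a'.subst0 b')

def completeDevelopment : Lam → Lam
  | .var n => .var n
  | .lam t => .lam (completeDevelopment t)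
  | .app (.lam a) b => (completeDevelopment a).subst0 (completeDevelopment b)
  | .app (.var n) b => .app (.var n) (completeDevelopment b)
  | .app (.app a c) b => .app (completeDevelopment (.app a c)) (completeDevelopment b)

namespace Par

theorem refl (t : Lam) : Par t t := by
  induction t with
  | var n => exact var n
  | app s t ihs iht => exact app ihs iht
  | lam t ih => exact lam ih

theorem of_beta {t u : Lam} (h : Beta t u) : Par t u := by
  induction h with
  | beta t u => exact beta (refl t) (refl u)
  | appL t _ ih => exact app ih (refl t)
  | appR s _ ih => exact app (refl s) ih
  | lam _ ih => exact lam ih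

theorem bRed {t u : Lam} (h : Par t u) : BRed t u := by
  induction h with
  | var x => exact .refl
  | lam _ ih => exact ih.lam
  | app _ _ iha ihb => exact (iha.appL _).trans (ihb.appR _)
  | beta _ _ iha ihb => exact ((iha.lam.appL _).trans (ihb.appR _)).tail (Beta.beta _ _)

theorem rename {t t' : Lam} (ρ : ℕ → ℕ) (h : Par t t') : Par (t.rename ρ) (t'.rename ρ) := by
  induction h generalizing ρ with
  | var x => exact refl _
  | lam _ ih => exact lam (ih _)
  | app _ _ iha ihb => exact app (iha ρ) (ihb ρ)
  | beta _ _ iha ihb => rw [subst0_rename]; exact beta (iha _) (ihb ρ)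

theorem subst {t t' : Lam} {σ σ' : ℕ → Lam} (hσ : ∀ n, Par (σ n) (σ' n))
    (h : Par t t') : Par (t.subst σ) (t'.subst σ') := by
  have hup : ∀ {σ σ' : ℕ → Lam}, (∀ n, Par (σ n) (σ' n)) → ∀ n, Par (up σ n) (up σ' n)
    | _, _, _, 0 => refl _
    | _, _, hσ, n + 1 => by simpa only [up, lift_eq_rename] using (hσ n).rename _
  induction h generalizing σ σ' with
  | var x => exact hσ x
  | lam _ ih => exact lam (ih (hup hσ))
  | app _ _ iha ihb => exact app (iha hσ) (ihb hσ)
  | beta _ _ iha ihb => rw [subst0_subst]; exact beta (iha (hup hσ)) (ihb hσ)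

theorem lam_inv {a y : Lam} : Par (.lam a) y → ∃ a', y = .lam a' ∧ Par a a'
  | lam h => ⟨_, rfl, h⟩

theorem triangle {t u : Lam} (h : Par t u) : Par u (completeDevelopment t) := by
  induction h with
  | var x => exact refl _
  | lam _ ih => exact lam ih
  | beta _ _ iha ihb =>
    refine subst (fun n => ?_) iha
    cases n with
    | zero => exact ihb
    | succ n => exact refl _
  | @app a a' b b' ha _ iha ihb =>
    cases a with
    | var n => exact app iha ihb
    | app a₁ a₂ => exact app iha ihb
    | lam a₀ =>
      obtain ⟨a₀', rfl, -⟩ := ha.lam_inv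
      obtain ⟨c, hc, ha₀'⟩ := iha.lam_inv
      cases hc
      exact beta ha₀' ihb

end Par

end Lam

open Lam

theorem BetaEq.join {a b : Lam} (h : BetaEq a b) : Join BRed a b := by
  have hequiv : Equivalence (Join (ReflTransGen Par)) :=
    equivalence_join_reflTransGen fun a _ _ hab hac =>
      ⟨completeDevelopment a, .single hab.triangle, .single hac.triangle⟩
  obtain ⟨c, hac, hbc⟩ := hequiv.eqvGen_iff.mp <|
    EqvGen.mono (fun _ y hxy => ⟨y, .single (Par.of_beta hxy), .refl⟩) _ _ h
  have hpar {x y : Lam} (hxy : ReflTransGen Par x y) : BRed x y :=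
    ReflTransGen.lift' id (fun _ _ => Par.bRed) _ _ hxy
  exact ⟨c, hpar hac, hpar hbc⟩

theorem BetaEq.bRed_of_normalForm {a b : Lam} (h : BetaEq a b) (hb : NormalForm b) : BRed a b := by
  obtain ⟨c, hac, hbc⟩ := h.join
  rcases hbc.cases_head with rfl | ⟨d, hbd, -⟩
  · exact hac
  · exact absurd hbd (hb d)

theorem normalForm_churchBody (n : ℕ) : NormalForm (churchBody n) := by
  induction n with
  | zero => rintro u ⟨⟩
  | succ n ih =>
    rintro u (⟨⟩ | ⟨_, ⟨⟩⟩ | ⟨_, h⟩)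
    exact ih _ h

theorem normalForm_church (n : ℕ) : NormalForm (church n) := by
  rintro u (_ | _ | _ | h)
  rcases h with _ | _ | _ | h
  exact normalForm_churchBody n _ h

def succCont (g : Lam) : ℕ → Lam
  | 0 => g
  | k + 1 => .lam (.app ((succCont g k).lift 0) (.app csucc (.var 0)))

theorem whRed_succCont (g : Lam) (k j : ℕ) :
    WHRed (.app (succCont g k) (succIter j)) (.app g (succIter (j + k))) := by
  induction k generalizing j with
  | zero => exact .refl
  | succ k ih =>
    refine .head (WHStep.beta _ _) ?_
    change WHRed (.app (((succCont g k).lift 0).subst0 (succIter j)) (succIter (j + 1))) _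
    rw [lift_subst0, ← Nat.add_assoc, Nat.add_right_comm]
    exact ih (j + 1)

theorem whRed_subst_of_stdRed_churchBody {σ : ℕ → Lam} (hG : σ 0 = Gop) (hδ : σ 1 = deltaOp)
    (g : Lam) {n : ℕ} {ξ : Lam} (hξ : StdRed ξ (churchBody n)) (k : ℕ) :
    WHRed (.app (ξ.subst σ) (succCont g k)) (.app g (succIter (n + k))) := by
  induction n generalizing ξ k with
  | zero =>
    have hx : WHRed (ξ.subst σ) deltaOp := hδ ▸ hξ.var_inv.subst σ
    have hψ := whRed_succCont g k 0
    rw [Nat.zero_add] at hψ ⊢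
    exact (hx.beta _).trans hψ
  | succ n ih =>
    obtain ⟨A, B, hξ, hA, hB⟩ := hξ.app_inv
    have hf : WHRed (ξ.subst σ) (.app Gop (B.subst σ)) := by
      simpa only [subst, ← hG] using WHRed.subst σ (hξ.trans (hA.var_inv.appL B))
    have hGψ : WHRed (.app (.app Gop (B.subst σ)) (succCont g k))
        (.app (B.subst σ) (succCont g (k + 1))) := by
      refine .head (.app _ (.beta _ _)) (.head (.beta _ _) ?_)
      change WHRed (.app (((B.subst σ).lift 0).subst0 (succCont g k)) _) _
      rw [lift_subst0]
      exact .refl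
    rw [Nat.add_right_comm]
    exact ((hf.appL _).trans hGψ).trans (ih hB (k + 1))

/-- For every `n` and every `θ ≃β n̲`, `(T₁)θf ≻ (f)(s̲)ⁿ0̲` (with `f = var 0`). -/
theorem T1_head_reduction (n : ℕ) (θ : Lam) (h : BetaEq θ (church n)) :
    HRed (.app (.app T1 θ) (.var 0)) (.app (.var 0) (succIter n)) := by
  obtain ⟨A, hθ, hA⟩ := (StdRed.of_bRed (h.bRed_of_normalForm (normalForm_church n))).lam_inv
  obtain ⟨B, hA, hB⟩ := hA.lam_inv
  have hθδ : WHRed (.app θ deltaOp) (.lam (B.subst (up (scons deltaOp var)))) :=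
    (hθ.beta deltaOp).trans (hA.subst _)
  have hθδG : WHRed (.app (.app θ deltaOp) Gop) (B.subst (scons Gop (scons deltaOp var))) := by
    simpa only [subst_up_subst0] using hθδ.beta Gop
  refine WHRed.hRed (.head (.app _ (.beta _ _)) ?_)
  exact (hθδG.appL _).trans (whRed_subst_of_stdRed_churchBody rfl rfl (.var 0) hB 0)
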